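/- Let x_1,…,x_K ∈ ℝ^N and let G : ℝ^N → ℝ^N satisfy the min-descent assumption for x_1,…,x_K. Let (t_m) be the tropical descent sequence driven by G with step sizes a_m > 0, and assume that for every m ≥ 0, G(t_m) ≠ 0 and Σ_{i≤N} G(t_m)_i = 0. Fix ε > 0; let M_1 be such that a_m < ε/N for all m ≥ M_1, and let M_2 ≥ M_1 be such that s_{M_2} ≥ max_{j≤N} Δ_j(t_{M_1}) + s_{M_1} − K·ε. Then for every j ≤ N there exists m with M_1 ≤ m ≤ M_2 such that δ_j(t_m) ≤ ε. -/

import Mathlib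

/-- `Δ_j(t) = Σ_{k ≤ K} Σ_{i ≤ N} [t_j − x_{k j} − t_i + x_{k i}]⁺`. -/
def Delta {N K : ℕ} (x : Fin K → Fin N → ℝ) (j : Fin N) (t : Fin N → ℝ) : ℝ :=
  ∑ k, ∑ i, max (t j - x k j - t i + x k i) 0

/-- `δ_j(t) = min_{k ≤ K} Σ_{i ≤ N} [t_j − x_{k j} − t_i + x_{k i}]⁺`. -/
noncomputable def deltaF {N K : ℕ} [NeZero K] (x : Fin K → Fin N → ℝ)
    (j : Fin N) (t : Fin N → ℝ) : ℝ :=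
  Finset.univ.inf' Finset.univ_nonempty
    (fun k => ∑ i, max (t j - x k j - t i + x k i) 0)

/-- Along tropical descent, for every coordinate `j` the quantity `δ_j` drops below `ε`
at some time between `M₁` and `M₂`. -/
theorem stmt10 {N K : ℕ} [NeZero N] [NeZero K]
    (x : Fin K → Fin N → ℝ) (G : (Fin N → ℝ) → (Fin N → ℝ))
    (hG : ∀ t j, G t j < 0 → ∃ k, t j - x k j =
      Finset.univ.inf' Finset.univ_nonempty (fun i => t i - x k i))
    (a : ℕ → ℝ) (ha : ∀ m, 1 ≤ m → 0 < a m)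
    (t : ℕ → Fin N → ℝ)
    (hstep : ∀ m : ℕ, t (m + 1) =
      t m + a (m + 1) • (fun i => if G (t m) i < 0 then (1 : ℝ) else 0))
    (hGne : ∀ m, G (t m) ≠ 0) (hGsum : ∀ m, ∑ i, G (t m) i = 0)
    (ε : ℝ) (hε : 0 < ε)
    (M₁ M₂ : ℕ) (hM : M₁ ≤ M₂)
    (hM₁ : ∀ m, M₁ ≤ m → a m < ε / N)
    (hM₂ : (∑ n ∈ Finset.Icc 1 M₂, a n) ≥
      Finset.univ.sup' Finset.univ_nonempty (fun j => Delta x j (t M₁)) +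
        (∑ n ∈ Finset.Icc 1 M₁, a n) - K * ε) :
    ∀ j : Fin N, ∃ m, M₁ ≤ m ∧ m ≤ M₂ ∧ deltaF x j (t m) ≤ ε := by
  have hN : (0:ℝ) < (N:ℝ) := by exact_mod_cast Nat.pos_of_ne_zero (NeZero.ne N)
  have hK : (0:ℝ) < (K:ℝ) := by exact_mod_cast Nat.pos_of_ne_zero (NeZero.ne K)
  have hneg : ∀ m : ℕ, ∃ i, G (t m) i < 0 := by
    intro m
    by_contra h
    push_neg at h
    apply hGne m
    funext i
    exact (Finset.sum_eq_zero_iff_of_nonneg (fun i _ => h i)).mp (hGsum m) i (Finset.mem_univ i)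
  intro j
  by_contra hcon
  push_neg at hcon
  -- hcon : ∀ m, M₁ ≤ m → m ≤ M₂ → ε < deltaF x j (t m)
  have hdj : ∀ m, M₁ ≤ m → m ≤ M₂ → ¬ (G (t m) j < 0) := by
    intro m h1 h2 hj
    obtain ⟨k, hk⟩ := hG (t m) j hj
    have h0 : (∑ i, max (t m j - x k j - t m i + x k i) 0) = 0 := by
      apply Finset.sum_eq_zero
      intro i _
      have hle : t m j - x k j ≤ t m i - x k i := by
        rw [hk]; exact Finset.inf'_le _ (Finset.mem_univ i)
      exact max_eq_right (by linarith)
    have hd := Finset.inf'_le (b := k)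
      (fun k => ∑ i, max (t m j - x k j - t m i + x k i) 0) (Finset.mem_univ k)
    have hε' := hcon m h1 h2
    rw [h0] at hd
    unfold deltaF at hε'
    linarith
  -- the key step inequality
  have hstep' : ∀ m, M₁ ≤ m → m < M₂ →
      Delta x j (t (m+1)) + a (m+1) ≤ Delta x j (t m) := by
    intro m h1 h2
    have hδ := hcon m h1 (le_of_lt h2)
    have hj := hdj m h1 (le_of_lt h2)
    obtain ⟨i₀, hi₀⟩ := hneg m
    obtain ⟨k, hk⟩ := hG (t m) i₀ hi₀
    set a' := a (m+1) with ha'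
    have ha'pos : 0 < a' := ha (m+1) (by omega)
    have ha'lt : a' < ε / N := hM₁ (m+1) (by omega)
    have ht1 : ∀ i, t (m+1) i = t m i + a' * (if G (t m) i < 0 then (1:ℝ) else 0) := by
      intro i; rw [hstep m]; simp [smul_eq_mul, ha']
    have htj : t (m+1) j = t m j := by rw [ht1 j]; simp [hj]
    have hinf : ∀ i, t m i₀ - x k i₀ ≤ t m i - x k i := by
      intro i; rw [hk]; exact Finset.inf'_le _ (Finset.mem_univ i)
    have hy0 : ε / N < t m j - x k j - t m i₀ + x k i₀ := by
      have h1' : ε < ∑ i, max (t m j - x k j - t m i + x k i) 0 :=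
        lt_of_lt_of_le hδ (Finset.inf'_le _ (Finset.mem_univ k))
      have h2' : ∑ i, max (t m j - x k j - t m i + x k i) 0
          ≤ ∑ _i : Fin N, (t m j - x k j - t m i₀ + x k i₀) := by
        apply Finset.sum_le_sum
        intro i _
        have hii := hinf i
        have hjj := hinf j
        exact max_le (by linarith) (by linarith)
      rw [Finset.sum_const, Finset.card_univ, Fintype.card_fin, nsmul_eq_mul] at h2'
      have h3' : ε < N * (t m j - x k j - t m i₀ + x k i₀) := lt_of_lt_of_le h1' h2'
      rw [div_lt_iff₀ hN]
      nlinarith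
    have hdi₀ : t (m+1) i₀ = t m i₀ + a' := by rw [ht1 i₀]; simp [hi₀]
    have inner_nonneg : ∀ (k' : Fin K) (i : Fin N),
        0 ≤ max (t m j - x k' j - t m i + x k' i) 0
          - max (t (m+1) j - x k' j - t (m+1) i + x k' i) 0 := by
      intro k' i
      rw [htj, ht1 i]
      have hnn : 0 ≤ a' * (if G (t m) i < 0 then (1:ℝ) else 0) := by
        split_ifs <;> simp [le_of_lt ha'pos]
      have := max_le_max (le_refl (0:ℝ))
        (show t m j - x k' j - (t m i + a' * (if G (t m) i < 0 then (1:ℝ) else 0)) + x k' i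
          ≤ t m j - x k' j - t m i + x k' i by linarith)
      rw [max_comm _ (0:ℝ), max_comm _ (0:ℝ)]
      linarith
    have key_term : a' ≤ max (t m j - x k j - t m i₀ + x k i₀) 0
        - max (t (m+1) j - x k j - t (m+1) i₀ + x k i₀) 0 := by
      rw [htj, hdi₀]
      have hεN : 0 < ε / N := div_pos hε hN
      rw [max_eq_left (by linarith), max_eq_left (by linarith)]
      linarith
    have key : a' ≤ Delta x j (t m) - Delta x j (t (m+1)) := by
      have e1 : Delta x j (t m) - Delta x j (t (m+1))
          = ∑ k' : Fin K, ∑ i : Fin N, (max (t m j - x k' j - t m i + x k' i) 0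
            - max (t (m+1) j - x k' j - t (m+1) i + x k' i) 0) := by
        unfold Delta
        rw [← Finset.sum_sub_distrib]
        exact Finset.sum_congr rfl (fun k' _ => (Finset.sum_sub_distrib _ _).symm)
      rw [e1]
      calc a' ≤ ∑ i : Fin N, (max (t m j - x k j - t m i + x k i) 0
            - max (t (m+1) j - x k j - t (m+1) i + x k i) 0) :=
          le_trans key_term
            (Finset.single_le_sum (fun i _ => inner_nonneg k i) (Finset.mem_univ i₀))
        _ ≤ _ :=
          Finset.single_le_sum
            (fun k' _ => Finset.sum_nonneg (fun i _ => inner_nonneg k' i))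
            (Finset.mem_univ k)
    linarith
  -- accumulate the decrease
  have hind : ∀ m, M₁ ≤ m → m ≤ M₂ →
      Delta x j (t m) + ∑ n ∈ Finset.Ioc M₁ m, a n ≤ Delta x j (t M₁) := by
    intro m hm
    induction m, hm using Nat.le_induction with
    | base => intro _; simp
    | succ m hm ih =>
      intro hm2
      have h1 := ih (by omega)
      have h2 := hstep' m hm (by omega)
      rw [Finset.sum_Ioc_succ_top hm]
      linarith
  have h1 := hind M₂ hM le_rfl
  have hsum : ∑ n ∈ Finset.Icc 1 M₂, a n
      = ∑ n ∈ Finset.Icc 1 M₁, a n + ∑ n ∈ Finset.Ioc M₁ M₂, a n := by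
    rw [show (1:ℕ) = 0 + 1 from rfl, Finset.Icc_add_one_left_eq_Ioc, Finset.Icc_add_one_left_eq_Ioc]
    exact (Finset.sum_Ioc_consecutive _ (Nat.zero_le M₁) hM).symm
  have hsup : Delta x j (t M₁) ≤
      Finset.univ.sup' Finset.univ_nonempty (fun j => Delta x j (t M₁)) :=
    Finset.le_sup' (fun j => Delta x j (t M₁)) (Finset.mem_univ j)
  have hupper : Delta x j (t M₂) ≤ K * ε := by
    rw [hsum] at hM₂
    linarith
  have hδ₂ := hcon M₂ hM le_rfl
  have hlower : (K:ℝ) * ε < Delta x j (t M₂) := by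
    have hle : ∀ k : Fin K, deltaF x j (t M₂)
        ≤ ∑ i, max (t M₂ j - x k j - t M₂ i + x k i) 0 :=
      fun k => Finset.inf'_le _ (Finset.mem_univ k)
    calc (K:ℝ) * ε < K * deltaF x j (t M₂) := by
          exact mul_lt_mul_of_pos_left hδ₂ hK
      _ = ∑ _k : Fin K, deltaF x j (t M₂) := by
          rw [Finset.sum_const, Finset.card_univ, Fintype.card_fin, nsmul_eq_mul]
      _ ≤ Delta x j (t M₂) := Finset.sum_le_sum (fun k _ => hle k)
  linarith
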